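/- arXiv:2503.07571 — 2 statements merged into one kernel-verified Lean document; each statement's English description precedes it below -/
import Mathlib

section
/- Let m : [0, τ₀] → ℝ be a positive differentiable function with m(0) = 1 satisfying m'(θ) ≤ δ·m(θ) + ((1 + e^{θΔ})/2)·V·θ·m(θ) + ε·(M+δ)·e^{2θM} for all θ ∈ [0, τ₀], and suppose m(θ) ≥ e^{−θM} for all θ ∈ [0, τ₀]. Then for all τ ∈ [0, τ₀], log m(τ) ≤ δτ + (V/2)·(τ²/2 + (e^{τΔ}(τΔ − 1) + 1)/Δ²) + ε·(M+δ)·(e^{2τM} − 1)/(2M), where δ, Δ, V, M > 0 and ε ≥ 0 are constants. -/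
/-!
Write `A θ = δ θ + (V/2)(θ²/2 + (e^{θΔ}(θΔ - 1) + 1)/Δ²)` and `C θ = ε(M+δ)(e^{2θM} - 1)/(2M)`
for the antiderivatives, vanishing at `0`, of the linear coefficient and of the forcing term of
the differential inequality `m' ≤ A' m + C'`. Since `A ≥ 0` and `C' ≥ 0`, the function
`m e^{-A} - C` has derivative `e^{-A}(m' - A' m) - C' ≤ (e^{-A} - 1) C' ≤ 0`, so it stays below
its value `1` at `0`. Hence `m ≤ (1 + C) e^A`, and `log (1 + C) ≤ C` gives the bound.
-/

open Real Set

section Comparison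

variable {m m' A a C c : ℝ → ℝ} {s t : ℝ}

theorem antitoneOn_mul_exp_neg_sub
    (hm : ∀ θ ∈ Icc s t, HasDerivAt m (m' θ) θ) (hA : ∀ θ ∈ Icc s t, HasDerivAt A (a θ) θ)
    (hC : ∀ θ ∈ Icc s t, HasDerivAt C (c θ) θ)
    (hineq : ∀ θ ∈ Icc s t, m' θ ≤ a θ * m θ + c θ)
    (hA_nonneg : ∀ θ ∈ Icc s t, 0 ≤ A θ) (hc_nonneg : ∀ θ ∈ Icc s t, 0 ≤ c θ) :
    AntitoneOn (fun θ => m θ * exp (-A θ) - C θ) (Icc s t) := by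
  have hderiv : ∀ θ ∈ Icc s t, HasDerivAt (fun θ => m θ * exp (-A θ) - C θ)
      (exp (-A θ) * (m' θ - a θ * m θ) - c θ) θ := fun θ hθ =>
    (((hm θ hθ).mul (hA θ hθ).neg.exp).sub (hC θ hθ)).congr_deriv
      (by simp only [Pi.neg_apply]; ring)
  refine antitoneOn_of_hasDerivWithinAt_nonpos (convex_Icc s t)
    (fun θ hθ => (hderiv θ hθ).continuousAt.continuousWithinAt)
    (fun θ hθ => (hderiv θ (interior_subset hθ)).hasDerivWithinAt) fun θ hθ => ?_
  replace hθ := interior_subset hθ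
  have hexp_le_one : exp (-A θ) ≤ 1 := exp_le_one_iff.2 (neg_nonpos.2 (hA_nonneg θ hθ))
  have hgrowth : m' θ - a θ * m θ ≤ c θ := by linarith [hineq θ hθ]
  calc exp (-A θ) * (m' θ - a θ * m θ) - c θ ≤ exp (-A θ) * c θ - c θ := by gcongr
    _ ≤ 0 := by linarith [mul_le_mul_of_nonneg_right hexp_le_one (hc_nonneg θ hθ)]

theorem log_le_add_of_hasDerivAt_le (hst : s ≤ t)
    (hm : ∀ θ ∈ Icc s t, HasDerivAt m (m' θ) θ) (hA : ∀ θ ∈ Icc s t, HasDerivAt A (a θ) θ)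
    (hC : ∀ θ ∈ Icc s t, HasDerivAt C (c θ) θ)
    (hineq : ∀ θ ∈ Icc s t, m' θ ≤ a θ * m θ + c θ)
    (hA_nonneg : ∀ θ ∈ Icc s t, 0 ≤ A θ) (hc_nonneg : ∀ θ ∈ Icc s t, 0 ≤ c θ)
    (hmt : 0 < m t) (hms : m s = 1) (hAs : A s = 0) (hCs : C s = 0) :
    log (m t) ≤ A t + C t := by
  have hs : s ∈ Icc s t := left_mem_Icc.2 hst
  have ht : t ∈ Icc s t := right_mem_Icc.2 hst
  have hCt : 0 ≤ C t := by
    have := monotoneOn_of_hasDerivWithinAt_nonneg (convex_Icc s t)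
      (fun θ hθ => (hC θ hθ).continuousAt.continuousWithinAt)
      (fun θ hθ => (hC θ (interior_subset hθ)).hasDerivWithinAt)
      (fun θ hθ => hc_nonneg θ (interior_subset hθ)) hs ht hst
    rwa [hCs] at this
  have hcomp := antitoneOn_mul_exp_neg_sub hm hA hC hineq hA_nonneg hc_nonneg hs ht hst
  simp only [hms, hAs, hCs, neg_zero, exp_zero, mul_one, sub_zero] at hcomp
  have hmt_le : m t ≤ (1 + C t) * exp (A t) := by
    calc m t = m t * exp (-A t) * exp (A t) := by
          rw [mul_assoc, ← exp_add, neg_add_cancel, exp_zero, mul_one]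
      _ ≤ (1 + C t) * exp (A t) := by gcongr; linarith
  calc log (m t) ≤ log ((1 + C t) * exp (A t)) := log_le_log hmt hmt_le
    _ = log (1 + C t) + A t := by rw [log_mul (by positivity) (exp_pos _).ne', log_exp]
    _ ≤ C t + A t := by gcongr; linarith [log_le_sub_one_of_pos (by positivity : 0 < 1 + C t)]
    _ = A t + C t := add_comm _ _

end Comparison

theorem exp_mul_sub_one_add_one_nonneg (x : ℝ) : 0 ≤ exp x * (x - 1) + 1 := by
  have h := add_one_le_exp (-x)
  rw [exp_neg] at h
  have hx := exp_pos x
  have : exp x * (-x + 1) ≤ 1 := by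
    calc exp x * (-x + 1) ≤ exp x * (exp x)⁻¹ := by gcongr
      _ = 1 := mul_inv_cancel₀ hx.ne'
  linarith

theorem hasDerivAt_exp_mul_sub_one_add_one_div {Δ : ℝ} (hΔ : Δ ≠ 0) (θ : ℝ) :
    HasDerivAt (fun θ => (exp (θ * Δ) * (θ * Δ - 1) + 1) / Δ ^ 2) (θ * exp (θ * Δ)) θ := by
  have hlin : HasDerivAt (fun θ => θ * Δ) Δ θ := by simpa using (hasDerivAt_id θ).mul_const Δ
  refine (((hlin.exp.mul (hlin.sub_const 1)).add_const 1).div_const (Δ ^ 2)).congr_deriv ?_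
  field_simp
  ring

theorem hasDerivAt_exp_mul_sub_one_div {k : ℝ} (hk : k ≠ 0) (θ : ℝ) :
    HasDerivAt (fun θ => (exp (θ * k) - 1) / k) (exp (θ * k)) θ := by
  have hlin : HasDerivAt (fun θ => θ * k) k θ := by simpa using (hasDerivAt_id θ).mul_const k
  exact ((hlin.exp.sub_const 1).div_const k).congr_deriv (by field_simp)

theorem stmt6_general (τ₀ δ Δ V M ε : ℝ) (hδ : 0 < δ) (hΔ : 0 < Δ)
    (hV : 0 < V) (hM : 0 < M) (hε : 0 ≤ ε)
    (m m' : ℝ → ℝ) (hpos : ∀ θ ∈ Set.Icc 0 τ₀, 0 < m θ) (hm0 : m 0 = 1)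
    (hderiv : ∀ θ ∈ Set.Icc 0 τ₀, HasDerivAt m (m' θ) θ)
    (hineq : ∀ θ ∈ Set.Icc 0 τ₀,
      m' θ ≤ δ * m θ + (1 + Real.exp (θ * Δ)) / 2 * V * θ * m θ +
        ε * (M + δ) * Real.exp (2 * θ * M)) :
    ∀ τ ∈ Set.Icc 0 τ₀,
      Real.log (m τ) ≤ δ * τ +
        V / 2 * (τ ^ 2 / 2 + (Real.exp (τ * Δ) * (τ * Δ - 1) + 1) / Δ ^ 2) +
        ε * (M + δ) * (Real.exp (2 * τ * M) - 1) / (2 * M) := by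
  intro τ hτ
  have hsub : Icc 0 τ ⊆ Icc 0 τ₀ := Icc_subset_Icc_right hτ.2
  have hA (θ : ℝ) : HasDerivAt
      (fun θ => δ * θ + V / 2 * (θ ^ 2 / 2 + (exp (θ * Δ) * (θ * Δ - 1) + 1) / Δ ^ 2))
      (δ + (1 + exp (θ * Δ)) / 2 * V * θ) θ := by
    refine (((hasDerivAt_id θ).const_mul δ).add
      ((((hasDerivAt_pow 2 θ).div_const 2).add
        (hasDerivAt_exp_mul_sub_one_add_one_div hΔ.ne' θ)).const_mul (V / 2))).congr_deriv ?_
    push_cast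
    ring
  have hC (θ : ℝ) : HasDerivAt (fun θ => ε * (M + δ) * (exp (2 * θ * M) - 1) / (2 * M))
      (ε * (M + δ) * exp (2 * θ * M)) θ := by
    have h := (hasDerivAt_exp_mul_sub_one_div (by positivity : 2 * M ≠ 0) θ).const_mul
      (ε * (M + δ))
    simp only [show ∀ y, y * (2 * M) = 2 * y * M from fun y => by ring, ← mul_div_assoc] at h
    exact h
  refine log_le_add_of_hasDerivAt_le hτ.1 (fun θ hθ => hderiv θ (hsub hθ)) (fun θ _ => hA θ)
    (fun θ _ => hC θ) (fun θ hθ => (hineq θ (hsub hθ)).trans_eq (by ring)) (fun θ hθ => ?_)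
    (fun θ _ => by positivity) (hpos τ hτ) hm0 (by simp) (by simp)
  have := exp_mul_sub_one_add_one_nonneg (θ * Δ)
  have : 0 ≤ θ := hθ.1
  positivity

theorem stmt6 (τ₀ δ Δ V M ε : ℝ) (hτ₀ : 0 ≤ τ₀) (hδ : 0 < δ) (hΔ : 0 < Δ)
    (hV : 0 < V) (hM : 0 < M) (hε : 0 ≤ ε)
    (m m' : ℝ → ℝ) (hpos : ∀ θ ∈ Set.Icc 0 τ₀, 0 < m θ) (hm0 : m 0 = 1)
    (hderiv : ∀ θ ∈ Set.Icc 0 τ₀, HasDerivAt m (m' θ) θ)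
    (hineq : ∀ θ ∈ Set.Icc 0 τ₀,
      m' θ ≤ δ * m θ + (1 + Real.exp (θ * Δ)) / 2 * V * θ * m θ +
        ε * (M + δ) * Real.exp (2 * θ * M))
    (hlow : ∀ θ ∈ Set.Icc 0 τ₀, Real.exp (-θ * M) ≤ m θ) :
    ∀ τ ∈ Set.Icc 0 τ₀,
      Real.log (m τ) ≤ δ * τ +
        V / 2 * (τ ^ 2 / 2 + (Real.exp (τ * Δ) * (τ * Δ - 1) + 1) / Δ ^ 2) +
        ε * (M + δ) * (Real.exp (2 * τ * M) - 1) / (2 * M) :=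
  stmt6_general τ₀ δ Δ V M ε hδ hΔ hV hM hε m m' hpos hm0 hderiv hineq
end

section
/- With L, Ψ, φ as above and p* ∈ (0,1) a fixed point of p ↦ φ(Ψ(p)) (i.e. φ(Ψ(p*)) = p*), we have (d/dp)[φ(Ψ(p))] evaluated at p* is < 1 if and only if L''(p*) < 0. -/
open Real Set Filter Topology

/-! With `F p = ∑ βᵢ pᵐⁱ`, the map is `p ↦ σ(2F'(p))` for the sigmoid `σ`, and
`L = F + h/2` for the binary entropy `h`. Since `σ' = σ(1 - σ)` and `h'' = -1/(p(1-p))`,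
at a fixed point the derivative of the map is `2p(1-p)F''(p)`, while
`L''(p) = F''(p) - 1/(2p(1-p))`; the two conditions differ by the positive factor `2p(1-p)`. -/

lemma Real.exp_div_one_add_exp (z : ℝ) : exp z / (1 + exp z) = sigmoid z := by
  rw [sigmoid_def, div_eq_iff (by positivity), exp_neg]
  field_simp
  ring

lemma Real.mul_log_add_one_sub_mul_log_one_sub (p : ℝ) :
    p * log p + (1 - p) * log (1 - p) = -binEntropy p := by
  simp only [binEntropy, log_inv]
  ring

lemma hasDerivAt_sum_mul_pow {ι : Type*} (s : Finset ι) (c : ι → ℝ) (n : ι → ℕ) (x : ℝ) :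
    HasDerivAt (fun x => ∑ i ∈ s, c i * x ^ n i) (∑ i ∈ s, c i * n i * x ^ (n i - 1)) x := by
  refine (HasDerivAt.fun_sum fun i _ => (hasDerivAt_pow (n i) x).const_mul (c i)).congr_deriv ?_
  exact Finset.sum_congr rfl fun i _ => by ring

lemma deriv_deriv_add_binEntropy_div_two {F : ℝ → ℝ} {p : ℝ} (hp : p ∈ Ioo 0 1)
    (hF : Differentiable ℝ F) (hF' : DifferentiableAt ℝ (deriv F) p) :
    deriv (deriv fun x => F x + binEntropy x / 2) p =
      deriv (deriv F) p - 1 / (2 * (p * (1 - p))) := by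
  obtain ⟨hp0, hp1⟩ := hp
  have hderiv : deriv (fun x => F x + binEntropy x / 2) =ᶠ[𝓝 p]
      fun x => deriv F x + deriv binEntropy x / 2 := by
    filter_upwards [Ioo_mem_nhds hp0 hp1] with x hx
    exact ((hF x).hasDerivAt.add
      ((differentiableAt_binEntropy hx.1.ne' (by linarith [hx.2])).hasDerivAt.div_const 2)).deriv
  have hent : DifferentiableAt ℝ (deriv binEntropy) p := by
    rw [show deriv binEntropy = fun x => log (1 - x) - log x from funext deriv_binEntropy]
    fun_prop (disch := linarith)
  have hent2 := deriv2_binEntropy (p := p)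
  simp only [Function.iterate_succ, Function.iterate_zero, Function.comp_apply,
    Function.id_def] at hent2
  rw [hderiv.deriv_eq, deriv_fun_add hF' (hent.div_const 2), deriv_div_const, hent2]
  field_simp [hp0.ne', (sub_pos.2 hp1).ne']
  ring

lemma deriv_sigmoid_two_mul_deriv_lt_one_iff {F : ℝ → ℝ} {p : ℝ} (hp : p ∈ Ioo 0 1)
    (hF : Differentiable ℝ F) (hF' : DifferentiableAt ℝ (deriv F) p)
    (hfix : sigmoid (2 * deriv F p) = p) :
    deriv (fun x => sigmoid (2 * deriv F x)) p < 1 ↔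
      deriv (deriv fun x => F x + binEntropy x / 2) p < 0 := by
  have hmap := (hasDerivAt_sigmoid _).comp p (hF'.hasDerivAt.const_mul 2)
  rw [Function.comp_def, hfix] at hmap
  have hpos : 0 < 2 * (p * (1 - p)) := by nlinarith [hp.1, hp.2]
  rw [hmap.deriv, deriv_deriv_add_binEntropy_div_two hp hF hF', sub_neg, lt_div_iff₀ hpos]
  constructor <;> intro h <;> linarith

theorem stmt11_general (K : ℕ) (β : Fin (K + 1) → ℝ)
    (m : Fin (K + 1) → ℕ)
    (L Ψ φ : ℝ → ℝ)
    (hL : ∀ p, L p = (∑ i, β i * p ^ m i) -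
      (1 / 2 * p * Real.log p + 1 / 2 * (1 - p) * Real.log (1 - p)))
    (hΨ : ∀ p, Ψ p = ∑ i, 2 * β i * (m i : ℝ) * p ^ (m i - 1))
    (hφ : ∀ z, φ z = Real.exp z / (1 + Real.exp z))
    (pstar : ℝ) (hpstar : pstar ∈ Set.Ioo (0 : ℝ) 1) (hfix : φ (Ψ pstar) = pstar) :
    deriv (fun p => φ (Ψ p)) pstar < 1 ↔ deriv (deriv L) pstar < 0 := by
  set F : ℝ → ℝ := fun p => ∑ i, β i * p ^ m i
  have hdF : deriv F = fun x => ∑ i, β i * m i * x ^ (m i - 1) :=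
    funext fun x => (hasDerivAt_sum_mul_pow _ _ _ x).deriv
  have φ_eq : φ = sigmoid := funext fun z => (hφ z).trans (exp_div_one_add_exp z)
  have Ψ_eq : Ψ = fun x => 2 * deriv F x := by
    funext x
    rw [hΨ, hdF, Finset.mul_sum]
    exact Finset.sum_congr rfl fun i _ => by ring
  have L_eq : L = fun x => F x + binEntropy x / 2 := by
    funext x
    rw [hL]
    linear_combination (-1 / 2 : ℝ) * mul_log_add_one_sub_mul_log_one_sub x
  subst φ_eq Ψ_eq L_eq
  refine deriv_sigmoid_two_mul_deriv_lt_one_iff hpstar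
    (fun x => (hasDerivAt_sum_mul_pow _ _ _ x).differentiableAt) ?_ hfix
  rw [hdF]
  exact (hasDerivAt_sum_mul_pow _ _ _ pstar).differentiableAt

/-- At a fixed point `p*` of `p ↦ φ(Ψ(p))`, the derivative of `p ↦ φ(Ψ(p))` is `< 1`
iff `L''(p*) < 0`. -/
theorem stmt11 (K : ℕ) (β : Fin (K + 1) → ℝ) (hβ : ∀ i : Fin (K + 1), i ≠ 0 → 0 ≤ β i)
    (m : Fin (K + 1) → ℕ) (hm0 : m 0 = 1) (hmono : Monotone m)
    (hm1 : ∀ i : Fin (K + 1), i ≠ 0 → 1 < m i)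
    (L Ψ φ : ℝ → ℝ)
    (hL : ∀ p, L p = (∑ i, β i * p ^ m i) -
      (1 / 2 * p * Real.log p + 1 / 2 * (1 - p) * Real.log (1 - p)))
    (hΨ : ∀ p, Ψ p = ∑ i, 2 * β i * (m i : ℝ) * p ^ (m i - 1))
    (hφ : ∀ z, φ z = Real.exp z / (1 + Real.exp z))
    (pstar : ℝ) (hpstar : pstar ∈ Set.Ioo (0 : ℝ) 1) (hfix : φ (Ψ pstar) = pstar) :
    deriv (fun p => φ (Ψ p)) pstar < 1 ↔ deriv (deriv L) pstar < 0 :=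
  stmt11_general K β m L Ψ φ hL hΨ hφ pstar hpstar hfix
end
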